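/- arXiv:cs/0009028 — 4 statements merged into one kernel-verified Lean document; each statement's English description precedes it below -/
import Mathlib

section
/- Let C₃ : ℕ → ℚ satisfy C₃(3) = 0 and C₃(3k) = 3·C₃(k) + 3k·f(k) + 3·i(k,k) for all k ≥ 1, where f(k) = k³/6 − k²/2 + k/3 and i(k,k) = (k(k−1)/2)². Then for all n = 3^j with j ≥ 1, C₃(n) = (5/312)n⁴ − (1/8)n³ + (7/24)n² − (19/104)n. -/
/-!
The closed form `P` satisfies the same recurrence as `C₃` and vanishes at `3`, so induction on `j`
along the powers of three gives `C₃ (3 ^ j) = P (3 ^ j)`.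
-/

/-- A particular quartic solution of `P (3x) = 3 P x + 3x f(x) + 3 i(x,x)` plus a multiple of the
homogeneous solution `x`, the multiple `-19/104` being fixed by `P 3 = 0`. -/
def singerCrossingClosedForm (x : ℚ) : ℚ :=
  5/312 * x^4 - 1/8 * x^3 + 7/24 * x^2 - 19/104 * x

lemma singerCrossingClosedForm_three : singerCrossingClosedForm 3 = 0 := by
  norm_num [singerCrossingClosedForm]

lemma singerCrossingClosedForm_three_mul (x : ℚ) :
    singerCrossingClosedForm (3 * x) = 3 * singerCrossingClosedForm x
      + 3 * x * (x^3 / 6 - x^2 / 2 + x / 3) + 3 * (x * (x - 1) / 2)^2 := by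
  unfold singerCrossingClosedForm
  ring

theorem stmt_3 (C₃ : ℕ → ℚ)
    (hbase : C₃ 3 = 0)
    (hrec : ∀ k : ℕ, 1 ≤ k →
      C₃ (3 * k) = 3 * C₃ k
        + 3 * (k : ℚ) * ((k : ℚ)^3 / 6 - (k : ℚ)^2 / 2 + (k : ℚ) / 3)
        + 3 * ((k : ℚ) * ((k : ℚ) - 1) / 2)^2) :
    ∀ j : ℕ, 1 ≤ j →
      C₃ (3 ^ j) = (5/312) * ((3:ℚ)^j)^4 - (1/8) * ((3:ℚ)^j)^3
        + (7/24) * ((3:ℚ)^j)^2 - (19/104) * ((3:ℚ)^j) := by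
  suffices h : ∀ j, 1 ≤ j → C₃ (3 ^ j) = singerCrossingClosedForm (3 ^ j) from h
  intro j hj
  induction j, hj using Nat.le_induction with
  | base => simpa [singerCrossingClosedForm_three] using hbase
  | succ n _ ih =>
    have hrec_n := hrec (3 ^ n) (Nat.one_le_pow _ _ three_pos)
    push_cast at hrec_n
    rw [pow_succ' (3 : ℕ), hrec_n, ih, pow_succ' (3 : ℚ), singerCrossingClosedForm_three_mul]
end

section
/- Let C₄ : ℕ → ℚ satisfy C₄(4) = 0 and C₄(4k) = 4·C₄(k) + 6·i(k,k) + 6k·f(k) + 4·e(k,k,k) for all k ≥ 1, where f(k) = k³/6 − k²/2 + k/3, i(k,k) = (k(k−1)/2)², and e(k,k,k) = k³(k−1)/2. Then for all n = 4^j with j ≥ 1, C₄(n) = (1/56)n⁴ − (2/15)n³ + (7/24)n² − (37/210)n. -/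
/-!
The recurrence `C₄(4k) = 4 C₄(k) + m(k)` determines `C₄` on the powers of `4` from `C₄(4)`,
so it suffices to check that the claimed quartic `Q` has `Q(4) = 0` and satisfies the same
recurrence, which is a polynomial identity in `k`.
-/

/-- Crossings in the drawing of `K_{4k}` that do not lie inside a single cluster. -/
def interClusterCrossings (k : ℚ) : ℚ :=
  6 * (k * (k - 1) / 2) ^ 2 + 6 * k * (k ^ 3 / 6 - k ^ 2 / 2 + k / 3) + 4 * (k ^ 3 * (k - 1) / 2)

def crossingClosedForm (n : ℚ) : ℚ :=
  (1/56) * n ^ 4 - (2/15) * n ^ 3 + (7/24) * n ^ 2 - (37/210) * n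

theorem crossingClosedForm_four : crossingClosedForm 4 = 0 := by
  norm_num [crossingClosedForm]

theorem crossingClosedForm_four_mul (k : ℚ) :
    crossingClosedForm (4 * k) = 4 * crossingClosedForm k + interClusterCrossings k := by
  unfold crossingClosedForm interClusterCrossings
  ring

theorem eq_of_pow_of_mul_recurrence {R : Type*} [Semiring R] {f g : ℕ → R} {b : ℕ} (hb : 0 < b)
    (a : R) (c : ℕ → R) (hbase : f b = g b)
    (hf : ∀ k, 1 ≤ k → f (b * k) = a * f k + c k)
    (hg : ∀ k, 1 ≤ k → g (b * k) = a * g k + c k) :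
    ∀ j, 1 ≤ j → f (b ^ j) = g (b ^ j) := by
  intro j hj
  induction j, hj using Nat.le_induction with
  | base => simpa using hbase
  | succ j _ ih =>
    have hpos : 1 ≤ b ^ j := Nat.one_le_pow _ _ hb
    rw [pow_succ', hf _ hpos, hg _ hpos, ih]

theorem stmt_5 (C₄ : ℕ → ℚ)
    (hbase : C₄ 4 = 0)
    (hrec : ∀ k : ℕ, 1 ≤ k →
      C₄ (4 * k) = 4 * C₄ k
        + 6 * ((k : ℚ) * ((k : ℚ) - 1) / 2)^2
        + 6 * (k : ℚ) * ((k : ℚ)^3 / 6 - (k : ℚ)^2 / 2 + (k : ℚ) / 3)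
        + 4 * ((k : ℚ)^3 * ((k : ℚ) - 1) / 2)) :
    ∀ j : ℕ, 1 ≤ j →
      C₄ (4 ^ j) = (1/56) * ((4:ℚ)^j)^4 - (2/15) * ((4:ℚ)^j)^3
        + (7/24) * ((4:ℚ)^j)^2 - (37/210) * ((4:ℚ)^j) := by
  intro j hj
  have hC : ∀ k, 1 ≤ k → C₄ (4 * k) = 4 * C₄ k + interClusterCrossings k := by
    intro k hk
    rw [hrec k hk, interClusterCrossings]
    ring
  have hQ : ∀ k, 1 ≤ k → crossingClosedForm ((4 * k : ℕ) : ℚ)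
      = 4 * crossingClosedForm (k : ℚ) + interClusterCrossings k := by
    intro k _
    push_cast
    exact crossingClosedForm_four_mul k
  have := eq_of_pow_of_mul_recurrence (g := fun n => crossingClosedForm n) (by norm_num) 4 _
    (by simpa using hbase.trans crossingClosedForm_four.symm) hC hQ j hj
  simpa [crossingClosedForm] using this
end

section
/- Let C₅ : ℕ → ℚ satisfy C₅(5) = 1 and C₅(5k) = 5·C₅(k) + 10·i(k,k) + 10k·f(k) + 10·e(k,k,k) + k⁴ for all k ≥ 1, where f(k) = k³/6 − k²/2 + k/3, i(k,k) = (k(k−1)/2)², and e(k,k,k) = k³(k−1)/2. Then for all n = 5^j with j ≥ 1, C₅(n) = (61/3720)n⁴ − (1/8)n³ + (7/24)n² − (227/1240)n. -/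
/-! The claimed quartic satisfies the same recurrence as `C₅`, as a polynomial identity in `k`,
and agrees with `C₅` at `n = 5`; induction on `j` along `n = 5 ^ j` finishes the proof. -/

def recursiveK5Crossings (n : ℚ) : ℚ :=
  (61/3720) * n^4 - (1/8) * n^3 + (7/24) * n^2 - (227/1240) * n

theorem recursiveK5Crossings_five_mul (k : ℚ) :
    recursiveK5Crossings (5 * k) = 5 * recursiveK5Crossings k
      + 10 * (k * (k - 1) / 2)^2
      + 10 * k * (k^3 / 6 - k^2 / 2 + k / 3)
      + 10 * (k^3 * (k - 1) / 2)
      + k^4 := by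
  unfold recursiveK5Crossings
  ring

theorem stmt_6 (C₅ : ℕ → ℚ)
    (hbase : C₅ 5 = 1)
    (hrec : ∀ k : ℕ, 1 ≤ k →
      C₅ (5 * k) = 5 * C₅ k
        + 10 * ((k : ℚ) * ((k : ℚ) - 1) / 2)^2
        + 10 * (k : ℚ) * ((k : ℚ)^3 / 6 - (k : ℚ)^2 / 2 + (k : ℚ) / 3)
        + 10 * ((k : ℚ)^3 * ((k : ℚ) - 1) / 2)
        + (k : ℚ)^4) :
    ∀ j : ℕ, 1 ≤ j →
      C₅ (5 ^ j) = (61/3720) * ((5:ℚ)^j)^4 - (1/8) * ((5:ℚ)^j)^3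
        + (7/24) * ((5:ℚ)^j)^2 - (227/1240) * ((5:ℚ)^j) := by
  intro j hj
  change C₅ (5 ^ j) = recursiveK5Crossings ((5 : ℚ) ^ j)
  induction j, hj using Nat.le_induction with
  | base =>
    rw [pow_one, hbase]
    norm_num [recursiveK5Crossings]
  | succ i _ ih =>
    rw [pow_succ', hrec _ (Nat.one_le_pow _ _ (by norm_num)), ih, pow_succ' (5 : ℚ),
      recursiveK5Crossings_five_mul]
    push_cast
    rfl
end

section
/- Define f_top(n) and f_bot(n) by f_top(3) = 0, f_bot(3) = 1, and for n = 3k: f_top(n) = 3[f_top(k) + e(k,k,1)] and f_bot(n) = 3[f_bot(k) + e(k,k,1)] + k³, where e(k,k,1) = k(k−1)/2·k = k²(k−1)/2. Then for all n = 3^j with j ≥ 1, f_top(n) = n³/16 − n²/4 + 3n/16 and f_bot(n) = 5n³/48 − n²/4 + 7n/48. -/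
/-! Both `f_top` and the claimed closed form `g` satisfy the same affine recurrence
`h (3k) = 3 h(k) + r(k)` and agree at `n = 3`, so they agree at every power `3 ^ j` with `j ≥ 1`;
likewise for `f_bot`. Checking that the cubic closed forms satisfy the recurrences is a polynomial
identity in `k`. -/

theorem eq_at_pow_of_same_recurrence {f g : ℕ → ℚ} {b : ℕ} (hb : 0 < b) (a : ℚ) (r : ℕ → ℚ)
    (hf : ∀ k, 1 ≤ k → f (b * k) = a * f k + r k)
    (hg : ∀ k, 1 ≤ k → g (b * k) = a * g k + r k)
    (hbase : f b = g b) :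
    ∀ j, 1 ≤ j → f (b ^ j) = g (b ^ j) := by
  intro j hj
  induction j, hj using Nat.le_induction with
  | base => simpa using hbase
  | succ j _ ih =>
    have hpos : 1 ≤ b ^ j := Nat.one_le_pow _ _ hb
    rw [pow_succ', hf _ hpos, hg _ hpos, ih]

def topClosedForm (n : ℚ) : ℚ := n ^ 3 / 16 - n ^ 2 / 4 + 3 * n / 16

def botClosedForm (n : ℚ) : ℚ := 5 * n ^ 3 / 48 - n ^ 2 / 4 + 7 * n / 48

theorem topClosedForm_mul_three (k : ℚ) :
    topClosedForm (3 * k) = 3 * topClosedForm k + 3 * (k ^ 2 * (k - 1) / 2) := by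
  unfold topClosedForm; ring

theorem botClosedForm_mul_three (k : ℚ) :
    botClosedForm (3 * k) = 3 * botClosedForm k + (3 * (k ^ 2 * (k - 1) / 2) + k ^ 3) := by
  unfold botClosedForm; ring

theorem stmt_9 (ftop fbot : ℕ → ℚ)
    (htop3 : ftop 3 = 0) (hbot3 : fbot 3 = 1)
    (htoprec : ∀ k : ℕ, 1 ≤ k →
      ftop (3 * k) = 3 * (ftop k + (k : ℚ)^2 * ((k : ℚ) - 1) / 2))
    (hbotrec : ∀ k : ℕ, 1 ≤ k →
      fbot (3 * k) = 3 * (fbot k + (k : ℚ)^2 * ((k : ℚ) - 1) / 2) + (k : ℚ)^3) :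
    ∀ j : ℕ, 1 ≤ j →
      ftop (3 ^ j) = ((3:ℚ)^j)^3 / 16 - ((3:ℚ)^j)^2 / 4 + 3 * ((3:ℚ)^j) / 16 ∧
      fbot (3 ^ j) = 5 * ((3:ℚ)^j)^3 / 48 - ((3:ℚ)^j)^2 / 4 + 7 * ((3:ℚ)^j) / 48 := by
  intro j hj
  have htop := eq_at_pow_of_same_recurrence (f := ftop) (g := fun n => topClosedForm n) three_pos 3
    (fun k => 3 * ((k : ℚ) ^ 2 * ((k : ℚ) - 1) / 2))
    (fun k hk => by rw [htoprec k hk]; ring)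
    (fun k _ => by push_cast; exact topClosedForm_mul_three k)
    (by rw [htop3, topClosedForm]; norm_num) j hj
  have hbot := eq_at_pow_of_same_recurrence (f := fbot) (g := fun n => botClosedForm n) three_pos 3
    (fun k => 3 * ((k : ℚ) ^ 2 * ((k : ℚ) - 1) / 2) + (k : ℚ) ^ 3)
    (fun k hk => by rw [hbotrec k hk]; ring)
    (fun k _ => by push_cast; exact botClosedForm_mul_three k)
    (by rw [hbot3, botClosedForm]; norm_num) j hj
  push_cast [topClosedForm, botClosedForm] at htop hbot
  exact ⟨htop, hbot⟩
end
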